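/- Let y = X β̄ + ε with supp(β̄) ⊆ G_S for some S ⊆ {1,…,m}. Assume that for every group j, λ_j ≥ 4 ρ₊(G_j)^{1/2} ‖(X_{G_j}ᵀ X_{G_j})^{−1/2} X_{G_j}ᵀ ε‖₂ / √n. Then any minimizer β̂ of the group Lasso objective (1/n)‖Xβ − y‖₂² + Σ_{j=1}^m λ_j ‖β_{G_j}‖₂ satisfies Σ_{j ∉ S} λ_j ‖β̂_{G_j}‖₂ ≤ 3 Σ_{j ∈ S} λ_j ‖β̄_{G_j} − β̂_{G_j}‖₂. -/

import Mathlib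

open Matrix MeasureTheory ProbabilityTheory

noncomputable def norm2 {ι : Type*} [Fintype ι] (v : ι → ℝ) : ℝ :=
  Real.sqrt (∑ i, v i ^ 2)

open scoped Classical in
noncomputable def invSqrt {ι : Type*} [Fintype ι] [DecidableEq ι] (M : Matrix ι ι ℝ) :
    Matrix ι ι ℝ :=
  if h : M.PosSemidef then
    (h.1.eigenvectorUnitary.1 * diagonal ((RCLike.ofReal : ℝ → ℝ) ∘ (√·) ∘ h.1.eigenvalues) *
      (star h.1.eigenvectorUnitary : Matrix ι ι ℝ))⁻¹ else 0

def colSub {n p : ℕ} (X : Matrix (Fin n) (Fin p) ℝ) (F : Finset (Fin p)) :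
    Matrix (Fin n) {i : Fin p // i ∈ F} ℝ :=
  Matrix.of fun r c => X r c.1

noncomputable def groupProj {n p : ℕ} (X : Matrix (Fin n) (Fin p) ℝ) (F : Finset (Fin p))
    (v : Fin n → ℝ) : ℝ :=
  norm2 ((invSqrt ((colSub X F)ᵀ * colSub X F)) *ᵥ ((colSub X F)ᵀ *ᵥ v))

def restr {p : ℕ} (F : Finset (Fin p)) (β : Fin p → ℝ) : Fin p → ℝ :=
  fun i => if i ∈ F then β i else 0

/-- `G` is a partition of the index set into disjoint groups. -/
def IsPartition {p m : ℕ} (G : Fin m → Finset (Fin p)) : Prop :=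
  (∀ j₁ j₂, j₁ ≠ j₂ → Disjoint (G j₁) (G j₂)) ∧ Finset.univ.biUnion G = Finset.univ

/-- `β` is `(g, k)` strongly group-sparse. -/
def SGS {p m : ℕ} (G : Fin m → Finset (Fin p)) (g k : ℕ) (β : Fin p → ℝ) : Prop :=
  ∃ S : Finset (Fin m), S.card ≤ g ∧ (S.biUnion G).card ≤ k ∧
    ∀ i, β i ≠ 0 → i ∈ S.biUnion G

noncomputable def rhoMinusF {n p : ℕ} (X : Matrix (Fin n) (Fin p) ℝ) (F : Finset (Fin p)) : ℝ :=
  sInf {r : ℝ | ∃ β : Fin p → ℝ, β ≠ 0 ∧ (∀ i ∉ F, β i = 0) ∧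
    r = norm2 (X *ᵥ β) ^ 2 / (n * norm2 β ^ 2)}

noncomputable def rhoPlusF {n p : ℕ} (X : Matrix (Fin n) (Fin p) ℝ) (F : Finset (Fin p)) : ℝ :=
  sSup {r : ℝ | ∃ β : Fin p → ℝ, β ≠ 0 ∧ (∀ i ∉ F, β i = 0) ∧
    r = norm2 (X *ᵥ β) ^ 2 / (n * norm2 β ^ 2)}

noncomputable def rhoMinusN {n p m : ℕ} (X : Matrix (Fin n) (Fin p) ℝ)
    (G : Fin m → Finset (Fin p)) (s : ℕ) : ℝ :=
  sInf {r : ℝ | ∃ S : Finset (Fin m), (S.biUnion G).card ≤ s ∧ r = rhoMinusF X (S.biUnion G)}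

noncomputable def rhoPlusN {n p m : ℕ} (X : Matrix (Fin n) (Fin p) ℝ)
    (G : Fin m → Finset (Fin p)) (s : ℕ) : ℝ :=
  sSup {r : ℝ | ∃ S : Finset (Fin m), (S.biUnion G).card ≤ s ∧ r = rhoPlusF X (S.biUnion G)}

/-- The group Lasso objective. -/
noncomputable def glObj {n p m : ℕ} (X : Matrix (Fin n) (Fin p) ℝ)
    (G : Fin m → Finset (Fin p)) (lam : Fin m → ℝ) (y : Fin n → ℝ) (β : Fin p → ℝ) : ℝ :=
  (1 / (n : ℝ)) * norm2 (X *ᵥ β - y) ^ 2 + ∑ j, lam j * norm2 (restr (G j) β)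

/-!
Comparing the objective at `β̂` and at `β̄` gives the basic inequality
`∑ λ_j ‖β̂_{G_j}‖ ≤ (2/n) ⟪X Δ, ε⟫ + ∑ λ_j ‖β̄_{G_j}‖` with `Δ = β̂ - β̄`. Split `Δ` into its
group pieces; whitening each piece by `Q_j = (X_{G_j}ᵀ X_{G_j})^{1/2}` gives
`⟪X Δ_{G_j}, ε⟫ = ⟪Q_j Δ_{G_j}, Q_j⁻¹ X_{G_j}ᵀ ε⟫`, so Cauchy–Schwarz and the definition of `ρ₊`
bound the noise term by `∑ (λ_j / 2) ‖Δ_{G_j}‖`. As `β̄` vanishes outside `G_S`, the triangle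
inequality on the groups of `S` turns this into the cone condition.
-/

open scoped MatrixOrder

section Norm2

variable {ι : Type*} [Fintype ι]

lemma norm2_eq_norm_toLp (v : ι → ℝ) : norm2 v = ‖(WithLp.toLp 2 v : EuclideanSpace ℝ ι)‖ := by
  simp [norm2, EuclideanSpace.norm_eq]

lemma norm2_nonneg (v : ι → ℝ) : 0 ≤ norm2 v := Real.sqrt_nonneg _

lemma norm2_pos {v : ι → ℝ} (hv : v ≠ 0) : 0 < norm2 v := by
  simpa [norm2_eq_norm_toLp] using hv

lemma norm2_sub_comm (v w : ι → ℝ) : norm2 (v - w) = norm2 (w - v) := by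
  simp only [norm2_eq_norm_toLp, WithLp.toLp_sub, norm_sub_rev]

lemma norm2_le_norm2_add_norm2_sub (v w : ι → ℝ) : norm2 v ≤ norm2 w + norm2 (v - w) := by
  simpa only [norm2_eq_norm_toLp, WithLp.toLp_sub] using norm_le_norm_add_norm_sub' _ _

lemma norm2_sq (v : ι → ℝ) : norm2 v ^ 2 = ∑ i, v i ^ 2 :=
  Real.sq_sqrt (by positivity)

lemma norm2_sq_eq_dotProduct (v : ι → ℝ) : norm2 v ^ 2 = v ⬝ᵥ v := by
  rw [norm2_sq]
  simp only [dotProduct, sq]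

lemma dotProduct_le_norm2_mul_norm2 (v w : ι → ℝ) : v ⬝ᵥ w ≤ norm2 v * norm2 w := by
  simpa [norm2_eq_norm_toLp, EuclideanSpace.inner_eq_star_dotProduct, mul_comm] using
    real_inner_le_norm (WithLp.toLp 2 w : EuclideanSpace ℝ ι) (WithLp.toLp 2 v)

end Norm2

section Restr

variable {n p m : ℕ}

lemma restr_sub (F : Finset (Fin p)) (v w : Fin p → ℝ) :
    restr F (v - w) = restr F v - restr F w := by
  ext i
  simp only [restr, Pi.sub_apply]
  split_ifs <;> simp

lemma restr_eq_zero_of_support_subset {G : Fin m → Finset (Fin p)}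
    (hdisj : ∀ j₁ j₂, j₁ ≠ j₂ → Disjoint (G j₁) (G j₂)) {S : Finset (Fin m)} {v : Fin p → ℝ}
    (hv : ∀ i, v i ≠ 0 → i ∈ S.biUnion G) {j : Fin m} (hj : j ∉ S) : restr (G j) v = 0 := by
  ext i
  simp only [restr, Pi.zero_apply, ite_eq_right_iff]
  intro hi
  by_contra hvi
  obtain ⟨k, hkS, hik⟩ := Finset.mem_biUnion.1 (hv i hvi)
  exact Finset.disjoint_left.1 (hdisj k j (ne_of_mem_of_not_mem hkS hj)) hik hi

lemma sum_restr_of_isPartition {G : Fin m → Finset (Fin p)} (hG : IsPartition G)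
    (v : Fin p → ℝ) : ∑ j, restr (G j) v = v := by
  ext i
  obtain ⟨j₀, -, hij₀⟩ := Finset.mem_biUnion.1 (hG.2 ▸ Finset.mem_univ i)
  rw [Finset.sum_apply, Finset.sum_eq_single j₀]
  · simp [restr, hij₀]
  · intro j _ hj
    simp [restr, Finset.disjoint_left.1 (hG.1 j₀ j hj.symm) hij₀]
  · simp

lemma mulVec_restr (X : Matrix (Fin n) (Fin p) ℝ) (F : Finset (Fin p)) (v : Fin p → ℝ) :
    X *ᵥ restr F v = colSub X F *ᵥ fun i => v i := by
  ext r
  simp only [mulVec, dotProduct, colSub, restr, Matrix.of_apply, mul_ite, mul_zero]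
  rw [Finset.sum_ite_mem, Finset.univ_inter, Finset.sum_subtype F (fun _ => Iff.rfl)]

end Restr

section RhoPlus

lemma norm2_mulVec_sq_le {ι κ : Type*} [Fintype ι] [Fintype κ] (X : Matrix ι κ ℝ) (β : κ → ℝ) :
    norm2 (X *ᵥ β) ^ 2 ≤ (∑ r, ∑ k, X r k ^ 2) * norm2 β ^ 2 := by
  rw [norm2_sq, norm2_sq, Finset.sum_mul]
  refine Finset.sum_le_sum fun r _ => ?_
  simpa only [mulVec, dotProduct] using Finset.sum_mul_sq_le_sq_mul_sq Finset.univ (X r) β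

variable {n p : ℕ} (X : Matrix (Fin n) (Fin p) ℝ) (F : Finset (Fin p))

lemma rhoPlusF_nonneg : 0 ≤ rhoPlusF X F :=
  Real.sSup_nonneg fun _ ⟨_, _, _, hr⟩ => hr ▸ by positivity

lemma norm2_mulVec_sq_le_rhoPlusF {β : Fin p → ℝ} (hβ : ∀ i ∉ F, β i = 0) :
    norm2 (X *ᵥ β) ^ 2 ≤ n * rhoPlusF X F * norm2 β ^ 2 := by
  rcases eq_or_ne β 0 with rfl | hβ0
  · simp [norm2]
  rcases Nat.eq_zero_or_pos n with rfl | hn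
  · simp [norm2]
  have hβpos : 0 < norm2 β ^ 2 := pow_pos (norm2_pos hβ0) 2
  have hbdd : BddAbove {r : ℝ | ∃ β : Fin p → ℝ, β ≠ 0 ∧ (∀ i ∉ F, β i = 0) ∧
      r = norm2 (X *ᵥ β) ^ 2 / (n * norm2 β ^ 2)} := by
    refine ⟨(∑ r, ∑ k, X r k ^ 2) / n, ?_⟩
    rintro _ ⟨γ, hγ0, -, rfl⟩
    have hγpos : 0 < norm2 γ ^ 2 := pow_pos (norm2_pos hγ0) 2
    rw [div_le_div_iff₀ (by positivity) (by positivity)]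
    nlinarith [norm2_mulVec_sq_le X γ]
  have hle : _ ≤ rhoPlusF X F := le_csSup hbdd ⟨β, hβ0, hβ, rfl⟩
  rw [div_le_iff₀ (by positivity)] at hle
  linarith

lemma norm2_mulVec_le_rhoPlusF {β : Fin p → ℝ} (hβ : ∀ i ∉ F, β i = 0) :
    norm2 (X *ᵥ β) ≤ √n * √(rhoPlusF X F) * norm2 β := by
  rw [← pow_le_pow_iff_left₀ (norm2_nonneg _) (by positivity [norm2_nonneg β]) two_ne_zero,
    mul_pow, mul_pow, Real.sq_sqrt (by positivity), Real.sq_sqrt (rhoPlusF_nonneg X F)]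
  exact norm2_mulVec_sq_le_rhoPlusF X F hβ

end RhoPlus

section Whitening

variable {ι κ : Type*} [Fintype ι] [Fintype κ]

lemma invSqrt_eq_inv_sqrt [DecidableEq κ] {M : Matrix κ κ ℝ} (hM : M.PosSemidef) :
    invSqrt M = (CFC.sqrt M)⁻¹ := by
  rw [invSqrt, dif_pos hM, CFC.sqrt_eq_real_sqrt M hM.nonneg, cfcₙ_eq_cfc, hM.1.cfc_eq,
    IsHermitian.cfc, Unitary.conjStarAlgAut_apply]

lemma mulVec_dotProduct_mulVec (A : Matrix ι κ ℝ) (u v : κ → ℝ) :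
    (A *ᵥ u) ⬝ᵥ (A *ᵥ v) = u ⬝ᵥ ((Aᵀ * A) *ᵥ v) := by
  rw [← mulVec_mulVec, dotProduct_mulVec u Aᵀ, vecMul_transpose]

lemma mulVec_dotProduct_le_norm2_mul_norm2_invSqrt [DecidableEq κ] (A : Matrix ι κ ℝ)
    (hA : (Aᵀ * A).PosDef) (u : κ → ℝ) (e : ι → ℝ) :
    (A *ᵥ u) ⬝ᵥ e ≤ norm2 (A *ᵥ u) * norm2 (invSqrt (Aᵀ * A) *ᵥ (Aᵀ *ᵥ e)) := by
  set Q := CFC.sqrt (Aᵀ * A)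
  have hQQ : Q * Q = Aᵀ * A := CFC.sqrt_mul_sqrt_self _ hA.posSemidef.nonneg
  have hQt : Qᵀ = Q := by
    simpa only [IsHermitian, conjTranspose_eq_transpose_of_trivial] using
      (CFC.sqrt_nonneg (Aᵀ * A)).posSemidef.1
  have hQdet : IsUnit Q.det := by
    have hdet := hA.det_pos
    rw [← hQQ, det_mul] at hdet
    exact isUnit_iff_ne_zero.2 fun h => by simp [h] at hdet
  have hnorm : norm2 (Q *ᵥ u) = norm2 (A *ᵥ u) := by
    rw [← sq_eq_sq₀ (norm2_nonneg _) (norm2_nonneg _), norm2_sq_eq_dotProduct,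
      norm2_sq_eq_dotProduct, mulVec_dotProduct_mulVec, mulVec_dotProduct_mulVec, hQt, hQQ]
  rw [invSqrt_eq_inv_sqrt hA.posSemidef, ← hnorm]
  calc (A *ᵥ u) ⬝ᵥ e = u ⬝ᵥ (Q *ᵥ (Q⁻¹ *ᵥ (Aᵀ *ᵥ e))) := by
        rw [mulVec_mulVec, mul_nonsing_inv Q hQdet, one_mulVec, dotProduct_mulVec,
          vecMul_transpose]
    _ = (Q *ᵥ u) ⬝ᵥ (Q⁻¹ *ᵥ (Aᵀ *ᵥ e)) := by
        rw [dotProduct_mulVec, ← mulVec_transpose, hQt]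
    _ ≤ _ := dotProduct_le_norm2_mul_norm2 _ _

end Whitening

section GroupLasso

variable {n p m : ℕ} (X : Matrix (Fin n) (Fin p) ℝ)

lemma mulVec_restr_dotProduct_le (F : Finset (Fin p))
    (hpd : ((colSub X F)ᵀ * colSub X F).PosDef) (ε : Fin n → ℝ) (v : Fin p → ℝ) :
    (X *ᵥ restr F v) ⬝ᵥ ε ≤ √n * √(rhoPlusF X F) * groupProj X F ε * norm2 (restr F v) := by
  have hρ := norm2_mulVec_le_rhoPlusF X F (β := restr F v) fun i hi => if_neg hi
  calc (X *ᵥ restr F v) ⬝ᵥ ε ≤ norm2 (X *ᵥ restr F v) * groupProj X F ε := by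
        rw [mulVec_restr]
        exact mulVec_dotProduct_le_norm2_mul_norm2_invSqrt _ hpd _ _
    _ ≤ √n * √(rhoPlusF X F) * norm2 (restr F v) * groupProj X F ε :=
        mul_le_mul_of_nonneg_right hρ (norm2_nonneg _)
    _ = _ := by ring

lemma two_div_mul_mulVec_dotProduct_le {G : Fin m → Finset (Fin p)} (hG : IsPartition G)
    (hpd : ∀ j, ((colSub X (G j))ᵀ * colSub X (G j)).PosDef) (ε : Fin n → ℝ) {lam : Fin m → ℝ}
    (hlamlb : ∀ j, 4 * √(rhoPlusF X (G j)) * groupProj X (G j) ε / √n ≤ lam j)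
    (Δ : Fin p → ℝ) :
    2 / n * ((X *ᵥ Δ) ⬝ᵥ ε) ≤ ∑ j, lam j / 2 * norm2 (restr (G j) Δ) := by
  -- also true at `n = 0`, where both sides are junk zeros
  have hsqrt : (2 / n : ℝ) * √n = 2 / √n := by
    rw [div_mul_eq_mul_div, mul_div_assoc, Real.sqrt_div_self', mul_one_div]
  conv_lhs => rw [← sum_restr_of_isPartition hG Δ]
  rw [mulVec_sum, sum_dotProduct, Finset.mul_sum]
  refine Finset.sum_le_sum fun j _ => ?_
  calc 2 / n * ((X *ᵥ restr (G j) Δ) ⬝ᵥ ε)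
      ≤ 2 / n * (√n * √(rhoPlusF X (G j)) * groupProj X (G j) ε * norm2 (restr (G j) Δ)) := by
        gcongr
        exact mulVec_restr_dotProduct_le X (G j) (hpd j) ε Δ
    _ = 4 * √(rhoPlusF X (G j)) * groupProj X (G j) ε / √n / 2 * norm2 (restr (G j) Δ) := by
        rw [← mul_assoc, ← mul_assoc, ← mul_assoc, hsqrt]
        ring
    _ ≤ lam j / 2 * norm2 (restr (G j) Δ) := by
        gcongr
        · exact norm2_nonneg _
        · exact hlamlb j

lemma glObj_basic_inequality (G : Fin m → Finset (Fin p)) (lam : Fin m → ℝ)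
    {βbar βhat : Fin p → ℝ} {ε y : Fin n → ℝ} (hy : y = X *ᵥ βbar + ε)
    (hle : glObj X G lam y βhat ≤ glObj X G lam y βbar) :
    ∑ j, lam j * norm2 (restr (G j) βhat) ≤
      2 / n * ((X *ᵥ (βhat - βbar)) ⬝ᵥ ε) + ∑ j, lam j * norm2 (restr (G j) βbar) := by
  have hbar : X *ᵥ βbar - y = -ε := by rw [hy]; abel
  have hhat : X *ᵥ βhat - y = X *ᵥ (βhat - βbar) - ε := by rw [hy, mulVec_sub]; abel
  have hexpand : norm2 (X *ᵥ (βhat - βbar) - ε) ^ 2 = norm2 (X *ᵥ (βhat - βbar)) ^ 2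
      - 2 * ((X *ᵥ (βhat - βbar)) ⬝ᵥ ε) + norm2 (-ε) ^ 2 := by
    simp only [norm2_sq_eq_dotProduct, sub_dotProduct, dotProduct_sub, neg_dotProduct,
      dotProduct_neg, dotProduct_comm ε]
    ring
  rw [glObj, glObj, hbar, hhat, hexpand] at hle
  have hfit : 0 ≤ 1 / (n : ℝ) * norm2 (X *ᵥ (βhat - βbar)) ^ 2 := by positivity
  linear_combination hle + hfit

end GroupLasso

lemma sum_sdiff_le_three_mul_sum {ι : Type*} [Fintype ι] [DecidableEq ι] (S : Finset ι)
    {lam a b d : ι → ℝ} (hlam : ∀ j, 0 ≤ lam j) (hout : ∀ j ∉ S, b j = 0 ∧ d j = a j)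
    (hin : ∀ j ∈ S, b j ≤ a j + d j)
    (h : ∑ j, lam j * a j ≤ ∑ j, lam j / 2 * d j + ∑ j, lam j * b j) :
    ∑ j ∈ Finset.univ \ S, lam j * a j ≤ 3 * ∑ j ∈ S, lam j * d j := by
  simp only [← Finset.sum_sdiff (Finset.subset_univ S)] at h
  have hb_out : ∑ j ∈ Finset.univ \ S, lam j * b j = 0 :=
    Finset.sum_eq_zero fun j hj => by rw [(hout j (Finset.mem_sdiff.1 hj).2).1, mul_zero]
  have hd_out : ∑ j ∈ Finset.univ \ S, lam j / 2 * d j =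
      (∑ j ∈ Finset.univ \ S, lam j * a j) / 2 := by
    rw [Finset.sum_div]
    exact Finset.sum_congr rfl fun j hj => by rw [(hout j (Finset.mem_sdiff.1 hj).2).2]; ring
  have hd_in : ∑ j ∈ S, lam j / 2 * d j = (∑ j ∈ S, lam j * d j) / 2 := by
    rw [Finset.sum_div]
    exact Finset.sum_congr rfl fun j _ => by ring
  have hb_in : ∑ j ∈ S, lam j * b j ≤ ∑ j ∈ S, lam j * a j + ∑ j ∈ S, lam j * d j := by
    rw [← Finset.sum_add_distrib]
    gcongr with j hj
    rw [← mul_add]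
    exact mul_le_mul_of_nonneg_left (hin j hj) (hlam j)
  linarith

theorem stmt_13_general (n p m : ℕ)
    (X : Matrix (Fin n) (Fin p) ℝ) (G : Fin m → Finset (Fin p)) (hG : IsPartition G)
    (hpd : ∀ j, ((colSub X (G j))ᵀ * colSub X (G j)).PosDef)
    (βbar : Fin p → ℝ) (S : Finset (Fin m)) (hsupp : ∀ i, βbar i ≠ 0 → i ∈ S.biUnion G)
    (ε y : Fin n → ℝ) (hy : y = X *ᵥ βbar + ε)
    (lam : Fin m → ℝ)
    (hlamlb : ∀ j, 4 * Real.sqrt (rhoPlusF X (G j)) * groupProj X (G j) ε / Real.sqrt n ≤ lam j)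
    (βhat : Fin p → ℝ) (hmin : ∀ β, glObj X G lam y βhat ≤ glObj X G lam y β) :
    ∑ j ∈ Finset.univ \ S, lam j * norm2 (restr (G j) βhat) ≤
      3 * ∑ j ∈ S, lam j * norm2 (restr (G j) (βbar - βhat)) := by
  have hlam : ∀ j, 0 ≤ lam j := fun j =>
    (div_nonneg (mul_nonneg (by positivity) (norm2_nonneg _)) (Real.sqrt_nonneg _)).trans
      (hlamlb j)
  have hbar : ∀ j ∉ S, restr (G j) βbar = 0 := fun j hj =>
    restr_eq_zero_of_support_subset hG.1 hsupp hj
  refine sum_sdiff_le_three_mul_sum S (a := fun j => norm2 (restr (G j) βhat))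
    (b := fun j => norm2 (restr (G j) βbar)) (d := fun j => norm2 (restr (G j) (βbar - βhat)))
    hlam (fun j hj => ⟨?_, ?_⟩) (fun j _ => ?_) ?_
  · simp [hbar j hj, norm2]
  · rw [restr_sub, hbar j hj, norm2_sub_comm, sub_zero]
  · simp only [restr_sub]
    exact norm2_le_norm2_add_norm2_sub _ _
  calc ∑ j, lam j * norm2 (restr (G j) βhat)
      ≤ 2 / n * ((X *ᵥ (βhat - βbar)) ⬝ᵥ ε) + ∑ j, lam j * norm2 (restr (G j) βbar) :=
        glObj_basic_inequality X G lam hy (hmin βbar)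
    _ ≤ ∑ j, lam j / 2 * norm2 (restr (G j) (βbar - βhat)) +
          ∑ j, lam j * norm2 (restr (G j) βbar) := by
        simp only [restr_sub, norm2_sub_comm (restr _ βbar)]
        gcongr
        simpa only [restr_sub] using
          two_div_mul_mulVec_dotProduct_le X hG hpd ε hlamlb (βhat - βbar)

/-- Lemma 10: if `supp(β̄) ⊆ G_S` and for every group `j`,
`λ_j ≥ 4 ρ₊(G_j)^{1/2} ‖(X_{G_j}ᵀ X_{G_j})^{-1/2} X_{G_j}ᵀ ε‖₂/√n`, then any group Lasso
minimizer `β̂` satisfies `Σ_{j∉S} λ_j ‖β̂_{G_j}‖₂ ≤ 3 Σ_{j∈S} λ_j ‖β̄_{G_j} - β̂_{G_j}‖₂`. -/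
theorem stmt_13 (n p m : ℕ) (hn : 0 < n)
    (X : Matrix (Fin n) (Fin p) ℝ) (G : Fin m → Finset (Fin p)) (hG : IsPartition G)
    (hpd : ∀ j, ((colSub X (G j))ᵀ * colSub X (G j)).PosDef)
    (βbar : Fin p → ℝ) (S : Finset (Fin m)) (hsupp : ∀ i, βbar i ≠ 0 → i ∈ S.biUnion G)
    (ε y : Fin n → ℝ) (hy : y = X *ᵥ βbar + ε)
    (lam : Fin m → ℝ) (hlam : ∀ j, 0 < lam j)
    (hlamlb : ∀ j, 4 * Real.sqrt (rhoPlusF X (G j)) * groupProj X (G j) ε / Real.sqrt n ≤ lam j)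
    (βhat : Fin p → ℝ) (hmin : ∀ β, glObj X G lam y βhat ≤ glObj X G lam y β) :
    ∑ j ∈ Finset.univ \ S, lam j * norm2 (restr (G j) βhat) ≤
      3 * ∑ j ∈ S, lam j * norm2 (restr (G j) (βbar - βhat)) :=
  stmt_13_general n p m X G hG hpd βbar S hsupp ε y hy lam hlamlb βhat hmin
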